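/- For every prime p with p ≥ 5, the binomial coefficient (2p−1 choose p−1) satisfies (2p−1 choose p−1) ≡ 1 (mod p^3). -/

import Mathlib

/-!
In `ZMod (p ^ 3)` the binomial coefficient is `∏_{0<k<p} (1 + p/k)`, which, as `p ^ 3 = 0`, expands
to `1 + p e₁ + p² (e₁² - e₂) / 2` with `e₁ = ∑ 1/k` and `e₂ = ∑ 1/k²`. Since `x ↦ x⁻¹` permutes
`𝔽_p` and `∑_{x ∈ 𝔽_p} x² = 0` for `p > 3`, we get `e₂ ≡ 0 (mod p)`. Pairing `k` with `p - k` gives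
`2 e₁ = p ∑ 1/(k (p - k)) ≡ -p e₂ ≡ 0 (mod p²)`, so both correction terms vanish modulo `p ^ 3`.
-/

open Finset
open scoped Nat

theorem two_mul_prod_one_add_of_pow_three_eq_zero {ι R : Type*} [CommRing R] {π : R}
    (hπ : π ^ 3 = 0) (x : ι → R) (s : Finset ι) :
    2 * ∏ i ∈ s, (1 + π * x i) =
      2 + 2 * π * ∑ i ∈ s, x i + π ^ 2 * ((∑ i ∈ s, x i) ^ 2 - ∑ i ∈ s, x i ^ 2) := by
  classical
  induction s using Finset.induction with
  | empty => simp
  | insert a s ha ih =>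
    rw [prod_insert ha, sum_insert ha, sum_insert ha, mul_left_comm, ih]
    linear_combination (x a * ((∑ i ∈ s, x i) ^ 2 - ∑ i ∈ s, x i ^ 2)) * hπ

namespace ZMod

theorem natCast_mul_eq_zero_iff {m n N : ℕ} (hm : m ≠ 0) (h : m * n = N) (y : ZMod N) :
    (m : ZMod N) * y = 0 ↔ castHom (Dvd.intro_left m h) (ZMod n) y = 0 := by
  subst h
  obtain ⟨z, rfl⟩ := intCast_surjective y
  rw [map_intCast, ← Int.cast_natCast, ← Int.cast_mul, intCast_zmod_eq_zero_iff_dvd,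
    intCast_zmod_eq_zero_iff_dvd, Nat.cast_mul]
  exact mul_dvd_mul_iff_left (by exact_mod_cast hm)

theorem castHom_inv_of_isUnit {n N : ℕ} (h : n ∣ N) {a : ZMod N} (ha : IsUnit a) :
    castHom h (ZMod n) a⁻¹ = (castHom h (ZMod n) a)⁻¹ := by
  refine left_inv_eq_right_inv ?_ (mul_inv_of_unit _ (ha.map _))
  rw [mul_comm, ← map_mul, mul_inv_of_unit _ ha, map_one]

theorem isUnit_natCast_of_mem_Ico {p k : ℕ} (hp : p.Prime) (hk : k ∈ Ico 1 p) (n : ℕ) :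
    IsUnit (k : ZMod (p ^ n)) :=
  have hk0 : k ≠ 0 := Nat.one_le_iff_ne_zero.1 (mem_Ico.1 hk).1
  (isUnit_iff_coprime k (p ^ n)).2
    ((Nat.coprime_of_lt_prime hk0 (mem_Ico.1 hk).2 hp).symm.pow_right n)

theorem sum_range_natCast {n : ℕ} [NeZero n] {M : Type*} [AddCommMonoid M]
    (f : ZMod n → M) : ∑ k ∈ range n, f k = ∑ x, f x :=
  sum_nbij' (↑) val (fun _ _ => mem_univ _) (fun a _ => mem_range.2 a.val_lt)
    (fun _ hk => val_cast_of_lt (mem_range.1 hk)) (fun a _ => natCast_zmod_val a)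
    (fun _ _ => rfl)

end ZMod

theorem FiniteField.sum_inv_pow_lt_card_sub_one {K : Type*} [Field K] [Fintype K] {i : ℕ}
    (h : i < Fintype.card K - 1) : ∑ x : K, x⁻¹ ^ i = 0 := by
  rw [Fintype.sum_bijective _ inv_involutive.bijective _ (· ^ i) fun _ => rfl]
  exact FiniteField.sum_pow_lt_card_sub_one K i h

theorem ZMod.sum_Ico_inv_pow_eq_zero {p i : ℕ} [Fact p.Prime] (hi : 0 < i) (hip : i < p - 1) :
    ∑ k ∈ Ico 1 p, (k : ZMod p)⁻¹ ^ i = 0 := by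
  have h := FiniteField.sum_inv_pow_lt_card_sub_one (K := ZMod p) (by rwa [ZMod.card])
  rwa [← ZMod.sum_range_natCast, sum_range_eq_add_Ico _ (Fact.out : p.Prime).pos, Nat.cast_zero,
    inv_zero, zero_pow hi.ne', zero_add] at h

theorem ZMod.sum_Ico_inv_eq_zero_of_five_le {p : ℕ} [Fact p.Prime] (hp5 : 5 ≤ p) :
    ∑ k ∈ Ico 1 p, (k : ZMod (p ^ 2))⁻¹ = 0 := by
  have hp : p.Prime := Fact.out
  set x : ℕ → ZMod (p ^ 2) := fun k => (k : ZMod (p ^ 2))⁻¹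
  have hmem : ∀ k ∈ Ico 1 p, p - k ∈ Ico 1 p := fun k hk => by
    simp only [mem_Ico] at hk ⊢; omega
  have hrefl : ∑ k ∈ Ico 1 p, x (p - k) = ∑ k ∈ Ico 1 p, x k := by
    rw [sum_Ico_reflect _ _ le_self_add, Nat.add_sub_cancel_left, Nat.add_sub_cancel]
  have hpair : ∀ k ∈ Ico 1 p, x k + x (p - k) = p * (x k * x (p - k)) := by
    intro k hk
    have h1 : (k : ZMod (p ^ 2)) * x k = 1 :=
      ZMod.mul_inv_of_unit _ (ZMod.isUnit_natCast_of_mem_Ico hp hk 2)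
    have h2 : ((p - k : ℕ) : ZMod (p ^ 2)) * x (p - k) = 1 :=
      ZMod.mul_inv_of_unit _ (ZMod.isUnit_natCast_of_mem_Ico hp (hmem k hk) 2)
    linear_combination (-x (p - k)) * h1 - x k * h2 +
      x k * x (p - k) * Nat.cast_sub (R := ZMod (p ^ 2)) (mem_Ico.1 hk).2.le
  have hW : (p : ZMod (p ^ 2)) * ∑ k ∈ Ico 1 p, x k * x (p - k) = 0 := by
    rw [ZMod.natCast_mul_eq_zero_iff hp.ne_zero (sq p).symm, map_sum]
    calc ∑ k ∈ Ico 1 p, ZMod.castHom _ (ZMod p) (x k * x (p - k))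
        = ∑ k ∈ Ico 1 p, -(k : ZMod p)⁻¹ ^ 2 := by
          refine sum_congr rfl fun k hk => ?_
          rw [map_mul, ZMod.castHom_inv_of_isUnit _ (ZMod.isUnit_natCast_of_mem_Ico hp hk 2),
            ZMod.castHom_inv_of_isUnit _ (ZMod.isUnit_natCast_of_mem_Ico hp (hmem k hk) 2),
            map_natCast, map_natCast, Nat.cast_sub (mem_Ico.1 hk).2.le, ZMod.natCast_self,
            zero_sub, inv_neg]
          ring
      _ = 0 := by rw [sum_neg_distrib, ZMod.sum_Ico_inv_pow_eq_zero two_pos (by omega), neg_zero]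
  have h2 : IsUnit (2 : ZMod (p ^ 2)) := by
    exact_mod_cast ZMod.isUnit_natCast_of_mem_Ico hp (by simp only [mem_Ico]; omega) 2
  refine h2.mul_left_cancel ?_
  rw [mul_zero, two_mul]
  nth_rewrite 2 [← hrefl]
  rw [← sum_add_distrib, sum_congr rfl hpair, ← mul_sum, hW]

theorem Nat.factorial_mul_choose_two_mul_sub_one (p : ℕ) :
    (p - 1)! * (2 * p - 1).choose (p - 1) = ∏ k ∈ Ico 1 p, (p + k) := by
  rcases p.eq_zero_or_pos with rfl | hp
  · rfl
  rw [← show p + (p - 1) = 2 * p - 1 by omega, ← Nat.ascFactorial_eq_factorial_mul_choose,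
    Nat.ascFactorial_eq_prod_range, prod_Ico_eq_prod_range]
  exact prod_congr rfl fun k _ => by omega

theorem ZMod.natCast_choose_two_mul_sub_one {p : ℕ} (hp : p.Prime) (n : ℕ) :
    ((2 * p - 1).choose (p - 1) : ZMod (p ^ n)) =
      ∏ k ∈ Ico 1 p, (1 + p * (k : ZMod (p ^ n))⁻¹) := by
  have hunit : ∀ k ∈ Ico 1 p, IsUnit (k : ZMod (p ^ n)) := fun k hk =>
    isUnit_natCast_of_mem_Ico hp hk n
  have hfact : ∏ k ∈ Ico 1 p, (k : ZMod (p ^ n)) = ((p - 1)! : ℕ) := by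
    rw [← prod_Ico_id_eq_factorial, Nat.sub_add_cancel hp.one_le, Nat.cast_prod]
  have h := congrArg (Nat.cast : ℕ → ZMod (p ^ n)) (Nat.factorial_mul_choose_two_mul_sub_one p)
  rw [Nat.cast_mul, Nat.cast_prod, ← hfact] at h
  refine (IsUnit.prod_iff.2 hunit).mul_left_cancel (h.trans ?_)
  rw [← prod_mul_distrib]
  refine prod_congr rfl fun k hk => ?_
  rw [mul_one_add, mul_left_comm, mul_inv_of_unit _ (hunit k hk), mul_one, Nat.cast_add, add_comm]

theorem wolstenholme_choose_pred (p : ℕ) (hp : p.Prime) (h5 : 5 ≤ p) :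
    (p : ℤ)^3 ∣ (Nat.choose (2 * p - 1) (p - 1) : ℤ) - 1 := by
  have := Fact.mk hp
  have hunit : ∀ k ∈ Ico 1 p, IsUnit (k : ZMod (p ^ 3)) := fun k hk =>
    ZMod.isUnit_natCast_of_mem_Ico hp hk 3
  have hπ : (p : ZMod (p ^ 3)) ^ 3 = 0 := by exact_mod_cast ZMod.natCast_self (p ^ 3)
  have hS : (p : ZMod (p ^ 3)) * ∑ k ∈ Ico 1 p, (k : ZMod (p ^ 3))⁻¹ = 0 := by
    rw [ZMod.natCast_mul_eq_zero_iff hp.ne_zero (pow_succ' p 2).symm, map_sum,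
      ← ZMod.sum_Ico_inv_eq_zero_of_five_le h5]
    exact sum_congr rfl fun k hk => by
      rw [ZMod.castHom_inv_of_isUnit _ (hunit k hk), map_natCast]
  have hQ : (p : ZMod (p ^ 3)) ^ 2 * ∑ k ∈ Ico 1 p, (k : ZMod (p ^ 3))⁻¹ ^ 2 = 0 := by
    rw [← Nat.cast_pow, ZMod.natCast_mul_eq_zero_iff (pow_ne_zero 2 hp.ne_zero)
      (pow_succ p 2).symm, map_sum, ← ZMod.sum_Ico_inv_pow_eq_zero two_pos (by omega : 2 < p - 1)]
    exact sum_congr rfl fun k hk => by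
      rw [map_pow, ZMod.castHom_inv_of_isUnit _ (hunit k hk), map_natCast]
  have h2 : IsUnit (2 : ZMod (p ^ 3)) := by exact_mod_cast hunit 2 (by simp only [mem_Ico]; omega)
  have hC : ((2 * p - 1).choose (p - 1) : ZMod (p ^ 3)) = 1 := by
    refine h2.mul_left_cancel ?_
    rw [ZMod.natCast_choose_two_mul_sub_one hp, two_mul_prod_one_add_of_pow_three_eq_zero hπ]
    linear_combination (2 + p * ∑ k ∈ Ico 1 p, (k : ZMod (p ^ 3))⁻¹) * hS - hQ
  have hmod := (ZMod.natCast_eq_natCast_iff 1 _ (p ^ 3)).1 (by rw [hC, Nat.cast_one])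
  exact_mod_cast Nat.modEq_iff_dvd.1 hmod
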